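/- Every bounded automorphism of the regular rooted d-ary tree T has finite orbit-signalizer. -/

import Mathlib

open List

/-- Vertices of the rooted `d`-ary tree `T`: finite words over the alphabet
`X = Fin d`. -/
abbrev Vertex (d : ℕ) := List (Fin d)

/-- `g` is an automorphism of the rooted `d`-ary tree: a bijection of the
vertex set `X*` preserving word length and the prefix relation. -/
def IsTreeAut {d : ℕ} (g : Equiv.Perm (Vertex d)) : Prop :=
  (∀ v : Vertex d, (g v).length = v.length) ∧
    ∀ v w : Vertex d, g v <+: g (v ++ w)

theorem IsTreeAut.prefix_mono {d : ℕ} {g : Equiv.Perm (Vertex d)} (hg : IsTreeAut g)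
    {u u' : Vertex d} (h : u <+: u') : g u <+: g u' := by
  obtain ⟨t, rfl⟩ := h
  exact hg.2 u t

/-- The automorphism group `Aut(T)` of the rooted `d`-ary tree, as a subgroup
of the group of permutations of the vertex set. -/
def treeAut (d : ℕ) : Subgroup (Equiv.Perm (Vertex d)) where
  carrier := {g | IsTreeAut g}
  one_mem' := ⟨fun _ => rfl, fun v w => ⟨w, rfl⟩⟩
  mul_mem' := by
    intro g h hg hh
    obtain ⟨hg1, hg2⟩ := hg
    obtain ⟨hh1, hh2⟩ := hh
    refine ⟨fun v => ?_, fun v w => ?_⟩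
    · simp [Equiv.Perm.mul_apply, hg1, hh1]
    · obtain ⟨t, ht⟩ := hh2 v w
      simp only [Equiv.Perm.mul_apply]
      rw [← ht]
      exact hg2 (h v) t
  inv_mem' := by
    intro g hgmem
    obtain ⟨hg1, hg2⟩ := hgmem
    have hg : IsTreeAut g := ⟨hg1, hg2⟩
    have hlen' : ∀ v : Vertex d, (g⁻¹ v).length = v.length := by
      intro v
      conv_rhs => rw [← (show ∀ x, g (g⁻¹ x) = x from g.apply_symm_apply) v]
      rw [hg1]
    refine ⟨hlen', fun v w => ?_⟩
    have hle : (g⁻¹ v).length ≤ (g⁻¹ (v ++ w)).length := by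
      have h1 := hlen' v
      have h2 := hlen' (v ++ w)
      rw [List.length_append] at h2
      omega
    have htp : (g⁻¹ (v ++ w)).take (g⁻¹ v).length <+: g⁻¹ (v ++ w) :=
      List.take_prefix _ _
    have hgtp : g ((g⁻¹ (v ++ w)).take (g⁻¹ v).length) <+: v ++ w := by
      have := hg.prefix_mono htp
      rwa [show ∀ x, g (g⁻¹ x) = x from g.apply_symm_apply] at this
    have hlen_tp : (g ((g⁻¹ (v ++ w)).take (g⁻¹ v).length)).length = v.length := by
      rw [hg1, List.length_take, min_eq_left hle, hlen' v]
    have hveq : g ((g⁻¹ (v ++ w)).take (g⁻¹ v).length) = v := by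
      have h1 := List.prefix_iff_eq_take.mp hgtp
      have h2 := List.prefix_iff_eq_take.mp (List.prefix_append v w)
      rw [h1, hlen_tp]
      exact h2.symm
    have hkey : (g⁻¹ (v ++ w)).take (g⁻¹ v).length = g⁻¹ v := by
      apply g.injective
      rw [hveq, show ∀ x, g (g⁻¹ x) = x from g.apply_symm_apply]
    rw [← hkey]
    exact htp

open scoped Classical in
/-- The state (section) `g|_v` of `g` at the vertex `v` : the unique
automorphism satisfying `g (v ++ w) = g v ++ (g|_v) w` for all `w`. -/
noncomputable def state {d : ℕ} (g : Equiv.Perm (Vertex d)) (v : Vertex d) :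
    Equiv.Perm (Vertex d) :=
  if h : Function.Bijective (fun w : Vertex d => (g (v ++ w)).drop v.length) then
    Equiv.ofBijective _ h
  else 1

/-- A finite-state automorphism: one having finitely many states.  The
finite-state automorphisms form the group `F(X)`. -/
def FiniteState {d : ℕ} (g : Equiv.Perm (Vertex d)) : Prop :=
  (Set.range fun v : Vertex d => state g v).Finite

/-- The cardinality of the orbit `Orb_a(v)` of the vertex `v` under the cyclic
group generated by `a`. -/
noncomputable def orbitCard {d : ℕ} (a : Equiv.Perm (Vertex d)) (v : Vertex d) : ℕ :=
  Nat.card (Set.range fun n : ℤ => (a ^ n) v)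

/-- The orbit-signalizer `OS(a) = { a^m|_v : v ∈ X^*, m = |Orb_a(v)| }`. -/
noncomputable def OS {d : ℕ} (a : Equiv.Perm (Vertex d)) : Set (Equiv.Perm (Vertex d)) :=
  {s | ∃ v : Vertex d, s = state (a ^ orbitCard a v) v}

/-- `a` has finite orbit-signalizer. -/
def FiniteOS {d : ℕ} (a : Equiv.Perm (Vertex d)) : Prop := (OS a).Finite

/-- A self-similar (state-closed) subgroup. -/
def SelfSimilar {d : ℕ} (G : Subgroup (Equiv.Perm (Vertex d))) : Prop :=
  ∀ g ∈ G, ∀ v : Vertex d, state g v ∈ G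

/-- A contracting group: there is a finite set `N ⊆ G` such that every
`g ∈ G` has all its states in `N` from some level on. -/
def ContractingGroup {d : ℕ} (G : Subgroup (Equiv.Perm (Vertex d))) : Prop :=
  ∃ N : Set (Equiv.Perm (Vertex d)), N.Finite ∧ N ⊆ (G : Set (Equiv.Perm (Vertex d))) ∧
    ∀ g ∈ G, ∃ n : ℕ, ∀ v : Vertex d, n ≤ v.length → state g v ∈ N

/-- A contracting automorphism: the self-similar group generated by all of its
states is contracting. -/
def ContractingAut {d : ℕ} (f : Equiv.Perm (Vertex d)) : Prop :=
  ContractingGroup (Subgroup.closure (Set.range fun v : Vertex d => state f v))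

/-- The activity sequence `θ_k(g)`: the number of vertices `v` of level `k`
whose state `g|_v` acts nontrivially on the first level `X`. -/
noncomputable def theta {d : ℕ} (g : Equiv.Perm (Vertex d)) (k : ℕ) : ℕ :=
  Nat.card {v : Vertex d // v.length = k ∧ ∃ x : Fin d, state g v [x] ≠ [x]}

/-- A bounded automorphism: a finite-state automorphism with bounded activity
sequence.  The bounded automorphisms form the group `Pol(0)`. -/
def BoundedAut {d : ℕ} (g : Equiv.Perm (Vertex d)) : Prop :=
  FiniteState g ∧ ∃ C : ℕ, ∀ k : ℕ, theta g k ≤ C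

/-- A polynomial automorphism (an element of `Pol(∞)`): a finite-state
automorphism whose activity sequence is polynomially bounded. -/
def PolyAut {d : ℕ} (g : Equiv.Perm (Vertex d)) : Prop :=
  FiniteState g ∧ ∃ p : Polynomial ℕ, ∀ k : ℕ, theta g k ≤ p.eval k

/-- A finitary automorphism (an element of `Pol(-1)`): all states at some
level are trivial. -/
def Finitary {d : ℕ} (g : Equiv.Perm (Vertex d)) : Prop :=
  ∃ k : ℕ, ∀ v : Vertex d, v.length = k → state g v = 1

/-- A functionally recursive automorphism: a member of some finitely generated
self-similar subgroup of `Aut(T)`.  These form the group `FR(X)`. -/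
def FunctionallyRecursive {d : ℕ} (g : Equiv.Perm (Vertex d)) : Prop :=
  ∃ G : Subgroup (Equiv.Perm (Vertex d)), G ≤ treeAut d ∧ SelfSimilar G ∧
    (∃ S : Set (Equiv.Perm (Vertex d)), S.Finite ∧ G = Subgroup.closure S) ∧ g ∈ G

/-! The state of `a ^ m` at `v`, for `m` the length of the orbit of `v`, is the product of the
states of `a` at the `m` distinct vertices `a ^ i v` of that orbit, all on the level of `v`.
A nontrivial state of a finite-state automorphism becomes active on the first level within a
uniformly bounded depth `L`, so each level carries at most `(L + 1) C` nontrivial states when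
`θ_k(a) ≤ C`. Hence every element of `OS(a)` is a product of at most `(L + 1) C` of the finitely
many states of `a`. -/

lemma List.countP_range_eq_card_filter (m : ℕ) (p : ℕ → Prop) [DecidablePred p] :
    (List.range m).countP (fun i => decide (p i)) = ((Finset.range m).filter p).card := by
  rw [Finset.card_def, Finset.filter_val, Finset.range_val, ← Multiset.coe_range,
    Multiset.filter_coe, Multiset.coe_card, List.countP_eq_length_filter]

lemma finite_setOf_prod_of_countP_ne_one_le {M : Type*} [Monoid M] [DecidableEq M]
    {S : Set M} (hS : S.Finite) (n : ℕ) :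
    {g | ∃ l : List M, (∀ x ∈ l, x ∈ S) ∧ l.countP (· ≠ 1) ≤ n ∧ l.prod = g}.Finite := by
  have hlists : {l : List M | (∀ x ∈ l, x ∈ S) ∧ l.length ≤ n}.Finite := by
    have := hS.to_subtype
    refine ((List.finite_length_le S n).image (List.map (↑))).subset ?_
    rintro l ⟨hlS, hln⟩
    lift l to List S using hlS
    exact ⟨l, by simpa using hln, rfl⟩
  refine (hlists.image List.prod).subset ?_
  rintro _ ⟨l, hlS, hln, rfl⟩
  refine ⟨l.filter (· != 1), ⟨fun x hx => hlS x (List.mem_of_mem_filter hx), ?_⟩,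
    List.prod_filter_bne_one l⟩
  rw [← List.countP_eq_length_filter]
  convert hln using 3
  rw [decide_not]
  rfl

namespace IsTreeAut

variable {d : ℕ} {g h : Equiv.Perm (Vertex d)}

lemma inv (hg : IsTreeAut g) : IsTreeAut g⁻¹ := (treeAut d).inv_mem hg

lemma mul (hg : IsTreeAut g) (hh : IsTreeAut h) : IsTreeAut (g * h) := (treeAut d).mul_mem hg hh

lemma pow (hg : IsTreeAut g) (n : ℕ) : IsTreeAut (g ^ n) := (treeAut d).pow_mem hg n

lemma apply_append_eq_append_drop (hg : IsTreeAut g) (v w : Vertex d) :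
    g (v ++ w) = g v ++ (g (v ++ w)).drop v.length := by
  rw [← hg.1 v, List.prefix_iff_eq_append.mp (hg.2 v w)]

lemma bijective_drop_apply_append (hg : IsTreeAut g) (v : Vertex d) :
    Function.Bijective fun w : Vertex d => (g (v ++ w)).drop v.length := by
  refine ⟨fun w w' hww' => ?_, fun u => ?_⟩
  · have h := hg.apply_append_eq_append_drop v w
    rw [show (g (v ++ w)).drop v.length = (g (v ++ w')).drop v.length from hww',
      ← hg.apply_append_eq_append_drop v w'] at h
    exact List.append_cancel_left (g.injective h)
  · obtain ⟨t, ht⟩ := hg.inv.2 (g v) u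
    rw [Equiv.Perm.inv_def, Equiv.symm_apply_apply] at ht
    refine ⟨t, ?_⟩
    simp only [ht, List.drop_left, Equiv.apply_symm_apply, ← hg.1 v]

lemma apply_append (hg : IsTreeAut g) (v w : Vertex d) :
    g (v ++ w) = g v ++ state g v w := by
  rw [state, dif_pos (hg.bijective_drop_apply_append v)]
  exact hg.apply_append_eq_append_drop v w

lemma eq_state (hg : IsTreeAut g) {v : Vertex d} {s : Equiv.Perm (Vertex d)}
    (hs : ∀ w, g (v ++ w) = g v ++ s w) : s = state g v :=
  Equiv.ext fun w => List.append_cancel_left ((hs w).symm.trans (hg.apply_append v w))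

lemma state_isTreeAut (hg : IsTreeAut g) (v : Vertex d) : IsTreeAut (state g v) := by
  refine ⟨fun w => ?_, fun w u => ?_⟩
  · simpa [hg.1] using (congrArg List.length (hg.apply_append v w)).symm
  · have hp := hg.2 (v ++ w) u
    rw [List.append_assoc, hg.apply_append v w, hg.apply_append v (w ++ u)] at hp
    exact (List.prefix_append_right_inj _).mp hp

lemma state_mul (hg : IsTreeAut g) (hh : IsTreeAut h) (v : Vertex d) :
    state (g * h) v = state g (h v) * state h v :=
  ((hg.mul hh).eq_state fun w => by
    simp only [Equiv.Perm.mul_apply, hh.apply_append, hg.apply_append]).symm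

lemma state_append (hg : IsTreeAut g) (v w : Vertex d) :
    state g (v ++ w) = state (state g v) w :=
  (hg.eq_state fun u => by
    rw [List.append_assoc, hg.apply_append v, (hg.state_isTreeAut v).apply_append,
      hg.apply_append v, List.append_assoc]).symm

end IsTreeAut

lemma state_one {d : ℕ} (v : Vertex d) : state (1 : Equiv.Perm (Vertex d)) v = 1 :=
  ((treeAut d).one_mem.eq_state fun _ => rfl).symm

lemma orbitCard_eq_minimalPeriod {d : ℕ} (a : Equiv.Perm (Vertex d)) (v : Vertex d) :
    orbitCard a v = Function.minimalPeriod a v := by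
  have horbit : (Set.range fun n : ℤ => (a ^ n) v) = MulAction.orbit (Subgroup.zpowers a) v := by
    ext u
    simp [MulAction.mem_orbit_iff, Subgroup.exists_zpowers, Subgroup.smul_def, Equiv.Perm.smul_def]
  rw [orbitCard, horbit, Nat.card_congr (MulAction.orbitZPowersEquiv a v), Nat.card_zmod]
  rfl

section Activity

variable {d : ℕ} {g : Equiv.Perm (Vertex d)}

lemma IsTreeAut.state_pow (hg : IsTreeAut g) (v : Vertex d) (m : ℕ) :
    state (g ^ m) v = ((List.range m).map fun i => state g ((g ^ i) v)).reverse.prod := by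
  induction m with
  | zero => exact state_one v
  | succ n ih =>
    rw [pow_succ', hg.state_mul (hg.pow n), ih, List.range_succ]
    simp

lemma IsTreeAut.exists_state_apply_singleton_ne (hg : IsTreeAut g) (hg1 : g ≠ 1) :
    ∃ w : Vertex d, ∃ x : Fin d, state g w [x] ≠ [x] := by
  by_contra! hfix
  refine hg1 (Equiv.ext fun u => ?_)
  induction u using List.reverseRecOn with
  | nil => exact List.eq_nil_of_length_eq_zero (hg.1 [])
  | append_singleton w x ih => rw [hg.apply_append, ih, hfix]; rfl

lemma IsTreeAut.exists_active_depth_le (hg : IsTreeAut g) (hfs : FiniteState g) :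
    ∃ L : ℕ, ∀ v : Vertex d, state g v ≠ 1 →
      ∃ w : Vertex d, w.length ≤ L ∧ ∃ x : Fin d, state g (v ++ w) [x] ≠ [x] := by
  have hdepth : ∀ s ∈ Set.range (state g), ∀ᶠ L in Filter.atTop, s ≠ 1 →
      ∃ w : Vertex d, w.length ≤ L ∧ ∃ x : Fin d, state s w [x] ≠ [x] := by
    rintro _ ⟨v, rfl⟩
    by_cases hv : state g v = 1
    · simp [hv]
    obtain ⟨w, x, hx⟩ := (hg.state_isTreeAut v).exists_state_apply_singleton_ne hv
    filter_upwards [Filter.eventually_ge_atTop w.length] with L hL _ using ⟨w, hL, x, hx⟩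
  obtain ⟨L, hL⟩ := ((Filter.eventually_all_finite hfs).2 hdepth).exists
  exact ⟨L, fun v hv => by simpa only [hg.state_append] using hL _ ⟨v, rfl⟩ hv⟩

lemma IsTreeAut.exists_ncard_state_ne_one_le (hg : IsTreeAut g) (hfs : FiniteState g) :
    ∃ L : ℕ, ∀ k : ℕ, {v : Vertex d | v.length = k ∧ state g v ≠ 1}.ncard ≤
      ∑ j ∈ Finset.range (L + 1), theta g (k + j) := by
  obtain ⟨L, hL⟩ := hg.exists_active_depth_le hfs
  choose! W hWlen hWact using hL
  refine ⟨L, fun k => ?_⟩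
  let active (j : ℕ) : Set (Vertex d) :=
    {u | u.length = k + j ∧ ∃ x : Fin d, state g u [x] ≠ [x]}
  calc {v : Vertex d | v.length = k ∧ state g v ≠ 1}.ncard
      ≤ (⋃ j ∈ Finset.range (L + 1), active j).ncard := by
        refine Set.ncard_le_ncard_of_injOn (fun v => v ++ W v) ?_ ?_ ?_
        · rintro v ⟨rfl, hv⟩
          simp only [Set.mem_iUnion, Finset.mem_range]
          exact ⟨(W v).length, Nat.lt_succ_of_le (hWlen v hv), List.length_append, hWact v hv⟩
        · rintro v ⟨hv, -⟩ v' ⟨hv', -⟩ h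
          simpa [hv, hv'] using congrArg (List.take k) h
        · exact (Finset.finite_toSet _).biUnion fun j _ =>
            (List.finite_length_eq _ _).subset fun u hu => hu.1
    _ ≤ ∑ j ∈ Finset.range (L + 1), (active j).ncard := Finset.set_ncard_biUnion_le _ _
    _ = ∑ j ∈ Finset.range (L + 1), theta g (k + j) :=
        Finset.sum_congr rfl fun j _ => (Nat.card_coe_set_eq _).symm

lemma IsTreeAut.countP_state_orbit_ne_one_le [DecidableEq (Equiv.Perm (Vertex d))]
    (hg : IsTreeAut g) (v : Vertex d) :
    ((List.range (orbitCard g v)).map fun i => state g ((g ^ i) v)).reverse.countP (· ≠ 1) ≤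
      {u : Vertex d | u.length = v.length ∧ state g u ≠ 1}.ncard := by
  rw [List.countP_reverse, List.countP_map, orbitCard_eq_minimalPeriod, Function.comp_def,
    List.countP_range_eq_card_filter, ← Set.ncard_coe_finset]
  refine Set.ncard_le_ncard_of_injOn (fun i => (g ^ i) v) ?_ ?_ ?_
  · intro i hi
    simp only [Finset.coe_filter, Finset.mem_range, Set.mem_ofPred_eq] at hi
    exact ⟨(hg.pow i).1 v, hi.2⟩
  · exact (Function.iterate_injOn_Iio_minimalPeriod).mono fun i hi => by simp_all
  · exact (List.finite_length_eq _ _).subset fun u hu => hu.1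

end Activity

theorem finiteOS_of_bounded_general
    (d : ℕ) (a : Equiv.Perm (Vertex d))
    (ha : IsTreeAut a) (hba : BoundedAut a) :
    FiniteOS a := by
  classical
  obtain ⟨hfs, C, hC⟩ := hba
  obtain ⟨L, hL⟩ := ha.exists_ncard_state_ne_one_le hfs
  refine (finite_setOf_prod_of_countP_ne_one_le hfs ((L + 1) * C)).subset ?_
  rintro _ ⟨v, rfl⟩
  refine ⟨_, ?_, ?_, (ha.state_pow v _).symm⟩
  · simp
  · calc _ ≤ _ := ha.countP_state_orbit_ne_one_le v
      _ ≤ ∑ j ∈ Finset.range (L + 1), theta a (v.length + j) := hL v.length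
      _ ≤ ∑ j ∈ Finset.range (L + 1), C := Finset.sum_le_sum fun j _ => hC _
      _ = (L + 1) * C := by simp

/-- Every bounded automorphism of the regular rooted `d`-ary
tree has finite orbit-signalizer. -/
theorem finiteOS_of_bounded
    (d : ℕ) (hd : 2 ≤ d) (a : Equiv.Perm (Vertex d))
    (ha : IsTreeAut a) (hba : BoundedAut a) :
    FiniteOS a :=
  finiteOS_of_bounded_general d a ha hba
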